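/- arXiv:2507.07256 — 3 statements merged into one kernel-verified Lean document; each statement's English description precedes it below -/
import Mathlib

section
/- For integers y, w with 2|y| < |w| and w ≠ 0, and all real t, the estimate |(e^{2πi(y+w)t} − 1)/(y+w)² − (e^{2πiwt} − 1)/w²| ≤ C |y| |t| / w² holds with an absolute constant C. -/
lemma norm_exp_mul_I_sub_one_le (x : ℝ) : ‖Complex.exp ((x:ℂ) * Complex.I) - 1‖ ≤ |x| := by
  have h2 : ‖Complex.exp ((x:ℂ) * Complex.I) - 1‖ ^ 2 = 2 - 2 * Real.cos x := by
    rw [Complex.exp_mul_I]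
    have he : (Complex.cos x + Complex.sin x * Complex.I - 1)
        = ((Real.cos x - 1 : ℝ) : ℂ) + ((Real.sin x : ℝ) : ℂ) * Complex.I := by
      push_cast [Complex.ofReal_cos, Complex.ofReal_sin]; ring
    rw [he, Complex.sq_norm, Complex.normSq_add_mul_I]
    nlinarith [Real.sin_sq_add_cos_sq x]
  have hc := Real.one_sub_sq_div_two_le_cos (x := x)
  nlinarith [norm_nonneg (Complex.exp ((x:ℂ) * Complex.I) - 1), abs_nonneg x, sq_abs x]

set_option maxHeartbeats 1000000 in
/-- The Bellow–Calderón second-order kernel cancellation estimate. -/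
theorem stmt10 :
    ∃ C > (0 : ℝ), ∀ (y w : ℤ) (t : ℝ), w ≠ 0 → 2 * |y| < |w| →
      ‖(Complex.exp (2 * Real.pi * Complex.I * ((y + w : ℤ) : ℂ) * (t : ℂ)) - 1) /
            ((y + w : ℤ) : ℂ) ^ 2 -
          (Complex.exp (2 * Real.pi * Complex.I * (w : ℂ) * (t : ℂ)) - 1) / (w : ℂ) ^ 2‖ ≤
        C * |(y : ℝ)| * |t| / (w : ℝ) ^ 2 := by
  refine ⟨100, by norm_num, ?_⟩
  intro y w t hw hyw
  have hπ := Real.pi_pos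
  -- real abbreviations
  set yr : ℝ := (y : ℝ) with hyr
  set wr : ℝ := (w : ℝ) with hwr
  have hyw' : 2 * |yr| < |wr| := by
    have := hyw
    rw [← @Int.cast_lt ℝ] at this
    push_cast at this
    simpa [hyr, hwr] using this
  have hwr0 : wr ≠ 0 := by
    simpa [hwr] using (Int.cast_ne_zero (α := ℝ)).2 hw
  have hw1 : (1 : ℝ) ≤ |wr| := by
    have h1 : (1:ℝ) ≤ |(w:ℝ)| := by exact_mod_cast Int.one_le_abs hw
    simpa [hwr] using h1
  have ha0 : yr + wr ≠ 0 := by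
    have h1 : |wr| ≤ |yr| + |yr + wr| := by
      calc |wr| = |(yr + wr) - yr| := by ring_nf
      _ ≤ |yr + wr| + |yr| := abs_sub _ _
      _ = |yr| + |yr + wr| := by ring
    intro h
    rw [h] at h1; simp at h1
    nlinarith [abs_nonneg yr]
  have haZ : ((y + w : ℤ) : ℂ) ≠ 0 := by
    push_cast
    intro h
    apply ha0
    have : ((yr + wr : ℝ) : ℂ) = 0 := by push_cast [hyr, hwr]; exact_mod_cast h
    exact_mod_cast this
  have hwC : ((w : ℤ) : ℂ) ≠ 0 := by exact_mod_cast hw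
  -- lower bound on |y+w|
  have halb : |wr| / 2 ≤ |yr + wr| := by
    have h1 : |wr| ≤ |yr| + |yr + wr| := by
      calc |wr| = |(yr + wr) - yr| := by ring_nf
      _ ≤ |yr + wr| + |yr| := abs_sub _ _
      _ = |yr| + |yr + wr| := by ring
    nlinarith [abs_nonneg yr]
  -- exponentials
  set E2 : ℂ := Complex.exp (((2 * Real.pi * wr * t : ℝ) : ℂ) * Complex.I) with hE2
  set Ey : ℂ := Complex.exp (((2 * Real.pi * yr * t : ℝ) : ℂ) * Complex.I) with hEy
  have hexpw : Complex.exp (2 * Real.pi * Complex.I * (w : ℂ) * (t : ℂ)) = E2 := by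
    rw [hE2]; congr 1; push_cast [hwr]; ring
  have hexpa : Complex.exp (2 * Real.pi * Complex.I * ((y + w : ℤ) : ℂ) * (t : ℂ)) = Ey * E2 := by
    rw [hEy, hE2, ← Complex.exp_add]; congr 1; push_cast [hyr, hwr]; ring
  have hE2norm : ‖E2‖ = 1 := Complex.norm_exp_ofReal_mul_I _
  have hEybound : ‖Ey - 1‖ ≤ 2 * Real.pi * |yr| * |t| := by
    calc ‖Ey - 1‖ ≤ |2 * Real.pi * yr * t| := norm_exp_mul_I_sub_one_le _
    _ = 2 * Real.pi * |yr| * |t| := by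
        rw [abs_mul, abs_mul, abs_mul]
        rw [abs_of_pos hπ]; norm_num
  have hE2bound : ‖E2 - 1‖ ≤ 2 * Real.pi * |wr| * |t| := by
    calc ‖E2 - 1‖ ≤ |2 * Real.pi * wr * t| := norm_exp_mul_I_sub_one_le _
    _ = 2 * Real.pi * |wr| * |t| := by
        rw [abs_mul, abs_mul, abs_mul]
        rw [abs_of_pos hπ]; norm_num
  set aC : ℂ := ((y + w : ℤ) : ℂ) with haC
  set wC : ℂ := ((w : ℤ) : ℂ) with hwC'
  have key : (Ey * E2 - 1) / aC ^ 2 - (E2 - 1) / wC ^ 2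
      = E2 * (Ey - 1) / aC ^ 2 + (E2 - 1) * ((wC - aC) * (wC + aC) / (aC ^ 2 * wC ^ 2)) := by
    field_simp
    ring
  rw [hexpw, hexpa, key]
  have hnormaC : ‖aC‖ = |yr + wr| := by
    rw [haC]
    push_cast
    rw [show ((y:ℂ) + (w:ℂ)) = (((yr + wr : ℝ)) : ℂ) by push_cast [hyr, hwr]; ring]
    rw [Complex.norm_real, Real.norm_eq_abs]
  have hnormwC : ‖wC‖ = |wr| := by
    rw [hwC']; push_cast
    rw [show ((w:ℂ)) = ((wr : ℝ) : ℂ) by push_cast [hwr]; ring]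
    rw [Complex.norm_real, Real.norm_eq_abs]
  have hwma : wC - aC = ((-yr : ℝ) : ℂ) := by rw [haC, hwC']; push_cast [hyr, hwr]; ring
  have hwpa : wC + aC = ((yr + 2 * wr : ℝ) : ℂ) := by rw [haC, hwC']; push_cast [hyr, hwr]; ring
  have halb2 : (wr)^2 / 4 ≤ |yr + wr| ^ 2 := by
    have := halb
    nlinarith [abs_nonneg (yr + wr), sq_abs wr, abs_nonneg wr]
  have hT1 : ‖E2 * (Ey - 1) / aC ^ 2‖ ≤ 8 * Real.pi * |yr| * |t| / wr ^ 2 := by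
    rw [norm_div, norm_mul, norm_pow, hE2norm, hnormaC, one_mul]
    rw [div_le_div_iff₀ (by positivity) (by positivity)]
    calc ‖Ey - 1‖ * wr ^ 2 ≤ (2 * Real.pi * |yr| * |t|) * wr ^ 2 := by
          nlinarith [sq_nonneg wr, hEybound, norm_nonneg (Ey - 1)]
    _ ≤ (8 * Real.pi * |yr| * |t|) * (wr ^ 2 / 4) := by ring_nf; nlinarith [abs_nonneg yr, abs_nonneg t, sq_nonneg wr]
    _ ≤ (8 * Real.pi * |yr| * |t|) * |yr + wr| ^ 2 := by
          have h8 : 0 ≤ 8 * Real.pi * |yr| * |t| := by positivity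
          nlinarith
  have hT2 : ‖(E2 - 1) * ((wC - aC) * (wC + aC) / (aC ^ 2 * wC ^ 2))‖
      ≤ 20 * Real.pi * |yr| * |t| / wr ^ 2 := by
    rw [norm_mul, norm_div, norm_mul, norm_mul, norm_pow, norm_pow, hnormaC, hnormwC,
      hwma, hwpa]
    simp only [Complex.norm_real, Real.norm_eq_abs]
    have hy2w : |yr + 2 * wr| ≤ (5 / 2) * |wr| := by
      calc |yr + 2 * wr| ≤ |yr| + |2 * wr| := abs_add_le _ _
      _ = |yr| + 2 * |wr| := by rw [abs_mul]; norm_num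
      _ ≤ (5/2) * |wr| := by nlinarith
    rw [abs_neg]
    have hden : 0 < |yr + wr| ^ 2 * |wr| ^ 2 := by
      have : 0 < |yr + wr| := lt_of_lt_of_le (by positivity) halb
      positivity
    rw [← mul_div_assoc, div_le_div_iff₀ hden (by positivity)]
    have hkey : ‖E2 - 1‖ * (|yr| * |yr + 2 * wr|)
        ≤ (2 * Real.pi * |wr| * |t|) * (|yr| * ((5/2) * |wr|)) :=
      mul_le_mul hE2bound (mul_le_mul_of_nonneg_left hy2w (abs_nonneg yr))
        (by positivity) (by positivity)
    have habs2 : |wr| ^ 2 = wr ^ 2 := sq_abs wr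
    calc ‖E2 - 1‖ * (|yr| * |yr + 2 * wr|) * wr ^ 2
        ≤ (2 * Real.pi * |wr| * |t|) * (|yr| * ((5/2) * |wr|)) * wr ^ 2 :=
          mul_le_mul_of_nonneg_right hkey (sq_nonneg wr)
      _ = (5 * Real.pi * |yr| * |t|) * (|wr| ^ 2 * wr ^ 2) := by ring
      _ = (20 * Real.pi * |yr| * |t|) * ((wr ^ 2 / 4) * wr ^ 2) := by rw [habs2]; ring
      _ ≤ (20 * Real.pi * |yr| * |t|) * (|yr + wr| ^ 2 * wr ^ 2) := by
          apply mul_le_mul_of_nonneg_left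
            (mul_le_mul_of_nonneg_right halb2 (sq_nonneg wr)) (by positivity)
      _ = 20 * Real.pi * |yr| * |t| * (|yr + wr| ^ 2 * |wr| ^ 2) := by rw [habs2]
  calc ‖E2 * (Ey - 1) / aC ^ 2 + (E2 - 1) * ((wC - aC) * (wC + aC) / (aC ^ 2 * wC ^ 2))‖
      ≤ ‖E2 * (Ey - 1) / aC ^ 2‖ + ‖(E2 - 1) * ((wC - aC) * (wC + aC) / (aC ^ 2 * wC ^ 2))‖ :=
        norm_add_le _ _
    _ ≤ 8 * Real.pi * |yr| * |t| / wr ^ 2 + 20 * Real.pi * |yr| * |t| / wr ^ 2 := by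
        exact add_le_add hT1 hT2
    _ ≤ 100 * |yr| * |t| / wr ^ 2 := by
        rw [← add_div, div_le_div_iff₀ (by positivity) (by positivity)]
        have hm : (0:ℝ) ≤ |yr| * |t| * wr ^ 2 := by positivity
        nlinarith [hm, mul_le_mul_of_nonneg_right (le_of_lt Real.pi_lt_d2) hm]
end

section
/- Let μ be a probability measure on ℤ satisfying BA₂ with gauge h (i.e., BA₁ plus h(t) ≤ C t h'(t) for 0 < t < 1). Let r > 0, s ≥ 1, α ≥ −1 with sr > α + 1. Then ∫_{0<t<1/2} (∑_{n≥1} n^α |μ̂(t)|^{ns})^{1/s} · |1 − μ̂(t)|^r / t dt < ∞. -/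
open MeasureTheory
open Real Set Filter

private lemma head_sum {p : ℝ} (hp0 : 0 < p) (hp1 : p ≤ 1) (M : ℕ) :
    ∑ m ∈ Finset.range M, ((m : ℝ) + 1) ^ (p - 1) ≤ (M : ℝ) ^ p / p := by
  induction M with
  | zero => simp [Real.zero_rpow hp0.ne']
  | succ M ih =>
    rw [Finset.sum_range_succ]
    set x : ℝ := (M : ℝ) + 1 with hxdef
    have hx1 : (1 : ℝ) ≤ x := by by_contra hcon; push_neg at hcon; nlinarith [Nat.cast_nonneg (α := ℝ) M]
    have hx0 : (0 : ℝ) < x := lt_of_lt_of_le one_pos hx1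
    have hinv : 1 / x ≤ 1 := by rw [div_le_one hx0]; exact hx1
    have hb : (1 - 1 / x) ^ p ≤ 1 - p * (1 / x) := by
      have h1 : -1 ≤ -(1 / x) := by linarith
      have := rpow_one_add_le_one_add_mul_self (s := -(1 / x)) h1 hp0.le hp1
      rw [← sub_eq_add_neg] at this
      rw [mul_neg, ← sub_eq_add_neg] at this
      exact this
    have key : p * x ^ (p - 1) ≤ x ^ p - (x - 1) ^ p := by
      have hxe : x - 1 = x * (1 - 1 / x) := by field_simp
      have h2 : (x - 1) ^ p = x ^ p * (1 - 1 / x) ^ p := by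
        rw [hxe, Real.mul_rpow hx0.le (by linarith)]
      have h3 : x ^ p * (1 - 1 / x) ^ p ≤ x ^ p * (1 - p * (1 / x)) :=
        mul_le_mul_of_nonneg_left hb (Real.rpow_nonneg hx0.le p)
      have h4 : x ^ p * (1 - p * (1 / x)) = x ^ p - p * (x ^ p / x) := by
        field_simp
      have h5 : x ^ p / x = x ^ (p - 1) := (Real.rpow_sub_one hx0.ne' p).symm
      rw [h4, h5] at h3
      rw [h2] at *
      linarith
    have hM : ((M : ℝ)) ^ p = (x - 1) ^ p := by norm_num [hxdef]
    have hMs : ((M + 1 : ℕ) : ℝ) ^ p = x ^ p := by push_cast [hxdef]; norm_num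
    rw [hMs]
    have : x ^ (p - 1) ≤ (x ^ p - (x - 1) ^ p) / p := by
      rw [le_div_iff₀ hp0]; linarith
    rw [hM] at ih
    calc ∑ m ∈ Finset.range M, ((m : ℝ) + 1) ^ (p - 1) + x ^ (p - 1)
        ≤ (x - 1) ^ p / p + (x ^ p - (x - 1) ^ p) / p := add_le_add ih this
      _ = x ^ p / p := by ring

private lemma rpow_le_mul_exp {a l x : ℝ} (ha : 0 < a) (hl : 0 < l) (hx : 0 < x) :
    x ^ a ≤ (a / l) ^ a * Real.exp (l * x) := by
  have hal : (0 : ℝ) < a / l := by positivity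
  rw [Real.rpow_def_of_pos hx, Real.rpow_def_of_pos hal, ← Real.exp_add, Real.exp_le_exp]
  have hlog := Real.log_le_sub_one_of_pos (show (0 : ℝ) < x * l / a by positivity)
  have hlogeq : Real.log (x * l / a) = Real.log x - Real.log (a / l) := by
    rw [show x * l / a = x / (a / l) by field_simp,
      Real.log_div hx.ne' hal.ne']
  rw [hlogeq] at hlog
  have h2 : Real.log x ≤ Real.log (a / l) + x * l / a := by linarith
  calc Real.log x * a ≤ (Real.log (a / l) + x * l / a) * a :=
        mul_le_mul_of_nonneg_right h2 ha.le
    _ = Real.log (a / l) * a + l * x := by field_simp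

private lemma sum_bound {a : ℝ} (ha : -1 < a) :
    ∃ K : ℝ, 0 < K ∧ ∀ q : ℝ, 0 ≤ q → q < 1 →
      Summable (fun n : ℕ => ((n : ℝ) + 1) ^ a * q ^ (n + 1)) ∧
      ∑' n : ℕ, ((n : ℝ) + 1) ^ a * q ^ (n + 1) ≤ K * (1 - q) ^ (-(a + 1)) := by
  rcases le_or_gt a 0 with ha0 | ha0
  · -- case -1 < a ≤ 0
    set p := a + 1 with hp
    have hp0 : 0 < p := by simp only [hp]; linarith
    have hp1 : p ≤ 1 := by simp only [hp]; linarith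
    refine ⟨3 / p + 1, by positivity, fun q hq0 hq1 => ?_⟩
    set l := 1 - q with hl
    have hl0 : 0 < l := by simp only [hl]; linarith
    have hl1 : l ≤ 1 := by simp only [hl]; linarith
    have hlp : (0:ℝ) < l ^ p := Real.rpow_pos_of_pos hl0 p
    have hgeo : Summable (fun n : ℕ => q ^ (n + 1)) := by
      simpa [pow_succ] using (summable_geometric_of_lt_one hq0 hq1).mul_right q
    have hterm_le : ∀ n : ℕ, ((n : ℝ) + 1) ^ a * q ^ (n + 1) ≤ q ^ (n + 1) := by
      intro n
      have h1 : ((n : ℝ) + 1) ^ a ≤ 1 :=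
        Real.rpow_le_one_of_one_le_of_nonpos (by nlinarith [Nat.cast_nonneg (α := ℝ) n]) ha0
      nlinarith [pow_nonneg hq0 (n + 1), Real.rpow_nonneg (show (0:ℝ) ≤ (n:ℝ)+1 by positivity) a]
    have hnonneg : ∀ n : ℕ, 0 ≤ ((n : ℝ) + 1) ^ a * q ^ (n + 1) := fun n => by positivity
    have hsum : Summable (fun n : ℕ => ((n : ℝ) + 1) ^ a * q ^ (n + 1)) :=
      Summable.of_nonneg_of_le hnonneg hterm_le hgeo
    refine ⟨hsum, ?_⟩
    set N := ⌈2 / l⌉₊ with hN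
    have hN1 : 2 / l ≤ (N : ℝ) := Nat.le_ceil _
    have hN2 : (N : ℝ) ≤ 2 / l + 1 := (Nat.ceil_lt_add_one (by positivity)).le
    have h2l : (2:ℝ) ≤ 2 / l := by
      rw [le_div_iff₀ hl0]; linarith
    have hNpos : (0:ℝ) < (N : ℝ) := lt_of_lt_of_le (by norm_num) (le_trans h2l hN1)
    have hl_inv : (1:ℝ) ≤ 1 / l := by rw [le_div_iff₀ hl0]; linarith
    rw [← hsum.sum_add_tsum_nat_add N]
    have head : ∑ n ∈ Finset.range N, ((n : ℝ) + 1) ^ a * q ^ (n + 1) ≤ 3 / p * l ^ (-p) := by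
      have s1 : ∑ n ∈ Finset.range N, ((n : ℝ) + 1) ^ a * q ^ (n + 1)
          ≤ ∑ n ∈ Finset.range N, ((n : ℝ) + 1) ^ (p - 1) := by
        apply Finset.sum_le_sum
        intro n _
        have hqp : q ^ (n + 1) ≤ 1 := pow_le_one₀ hq0 hq1.le
        have h2 : (0:ℝ) ≤ ((n : ℝ) + 1) ^ a := Real.rpow_nonneg (by positivity) a
        have h3 : ((n : ℝ) + 1) ^ (p - 1) = ((n : ℝ) + 1) ^ a := by norm_num [hp]
        rw [h3]
        nlinarith
      have s2 := head_sum hp0 hp1 N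
      have s3 : (N : ℝ) ^ p / p ≤ (3 / l) ^ p / p := by
        gcongr
        rw [show (3:ℝ) / l = 2 / l + 1 / l by ring]
        linarith
      have s4 : (3 / l) ^ p / p ≤ 3 / p * l ^ (-p) := by
        have h3 : (3:ℝ) ^ p ≤ 3 := by
          calc (3:ℝ) ^ p ≤ (3:ℝ) ^ (1:ℝ) := Real.rpow_le_rpow_of_exponent_le (by norm_num) hp1
            _ = 3 := Real.rpow_one 3
        rw [Real.div_rpow (by norm_num) hl0.le, Real.rpow_neg hl0.le, div_div,
          div_le_iff₀ (by positivity : (0:ℝ) < l ^ p * p)]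
        have e : 3 / p * (l ^ p)⁻¹ * (l ^ p * p) = 3 := by
          field_simp
        rw [e]
        exact h3
      linarith
    have tail : ∑' n : ℕ, (((n + N : ℕ) : ℝ) + 1) ^ a * q ^ (n + N + 1) ≤ l ^ (-p) := by
      have hNa : ((N:ℝ)) ^ a ≤ l ^ (-a) := by
        have t1 : (N : ℝ) ^ a ≤ (2 / l) ^ a :=
          Real.rpow_le_rpow_of_nonpos (by positivity) hN1 ha0
        have t2 : (2 / l) ^ a = 2 ^ a * (l ^ a)⁻¹ := by
          rw [Real.div_rpow (by norm_num) hl0.le, div_eq_mul_inv]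
        have t3 : (2:ℝ) ^ a ≤ 1 := Real.rpow_le_one_of_one_le_of_nonpos (by norm_num) ha0
        have t4 : (0:ℝ) < (l ^ a)⁻¹ := by
          have := Real.rpow_pos_of_pos hl0 a; positivity
        rw [Real.rpow_neg hl0.le]
        calc (N : ℝ) ^ a ≤ 2 ^ a * (l ^ a)⁻¹ := by rw [← t2]; exact t1
          _ ≤ 1 * (l ^ a)⁻¹ := by nlinarith
          _ = (l ^ a)⁻¹ := one_mul _
      have hgN : Summable (fun n : ℕ => (N : ℝ) ^ a * q ^ (n + 1)) := hgeo.mul_left _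
      have hpt : ∀ n : ℕ, (((n + N : ℕ) : ℝ) + 1) ^ a * q ^ (n + N + 1)
          ≤ (N : ℝ) ^ a * q ^ (n + 1) := by
        intro n
        have u1 : ((((n + N : ℕ) : ℝ)) + 1) ^ a ≤ (N : ℝ) ^ a := by
          apply Real.rpow_le_rpow_of_nonpos hNpos _ ha0
          push_cast; linarith [Nat.cast_nonneg (α := ℝ) n]
        have u2 : q ^ (n + N + 1) ≤ q ^ (n + 1) :=
          pow_le_pow_of_le_one hq0 hq1.le (by omega)
        have u3 : (0:ℝ) ≤ ((((n + N : ℕ) : ℝ)) + 1) ^ a := Real.rpow_nonneg (by positivity) a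
        exact mul_le_mul u1 u2 (pow_nonneg hq0 _) (Real.rpow_nonneg hNpos.le a)
      have hsumshift : Summable (fun n : ℕ => (((n + N : ℕ) : ℝ) + 1) ^ a * q ^ (n + N + 1)) :=
        (summable_nat_add_iff (f := fun n : ℕ => ((n : ℝ) + 1) ^ a * q ^ (n + 1)) N).2 hsum
      calc ∑' n : ℕ, (((n + N : ℕ) : ℝ) + 1) ^ a * q ^ (n + N + 1)
          ≤ ∑' n : ℕ, (N : ℝ) ^ a * q ^ (n + 1) := Summable.tsum_le_tsum hpt hsumshift hgN
        _ = (N : ℝ) ^ a * ∑' n : ℕ, q ^ (n + 1) := tsum_mul_left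
        _ ≤ (N : ℝ) ^ a * l⁻¹ := by
            have : ∑' n : ℕ, q ^ (n + 1) ≤ l⁻¹ := by
              have e1 : ∑' n : ℕ, q ^ (n + 1) = (1 - q)⁻¹ * q := by
                simp only [pow_succ]
                rw [tsum_mul_right, tsum_geometric_of_lt_one hq0 hq1]
              rw [e1, ← hl]
              calc (1 - q)⁻¹ * q ≤ (1-q)⁻¹ * 1 := by
                    apply mul_le_mul_of_nonneg_left hq1.le
                    rw [← hl]; positivity
                _ = l⁻¹ := by rw [mul_one, hl]
            exact mul_le_mul_of_nonneg_left this (Real.rpow_nonneg hNpos.le a)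
        _ ≤ l ^ (-a) * l⁻¹ := by
            have : (0:ℝ) ≤ l⁻¹ := by positivity
            nlinarith
        _ = l ^ (-p) := by
            rw [← Real.rpow_neg_one l, ← Real.rpow_add hl0]
            norm_num [hp]
            ring_nf
    calc ∑ n ∈ Finset.range N, ((n : ℝ) + 1) ^ a * q ^ (n + 1) +
          ∑' n : ℕ, (((n + N : ℕ) : ℝ) + 1) ^ a * q ^ (n + N + 1)
        ≤ 3 / p * l ^ (-p) + l ^ (-p) := add_le_add head tail
      _ = (3 / p + 1) * l ^ (-p) := by ring
  · -- case 0 < a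
    refine ⟨4 * (2 * a) ^ a, by positivity, fun q hq0 hq1 => ?_⟩
    set l := 1 - q with hl
    have hl0 : 0 < l := by simp only [hl]; linarith
    have hl1 : l ≤ 1 := by simp only [hl]; linarith
    set ρ := Real.exp (-(l / 2)) with hρdef
    have hρ0 : 0 < ρ := Real.exp_pos _
    have hρ1 : ρ < 1 := Real.exp_lt_one_iff.mpr (by linarith)
    have hgeo : Summable (fun n : ℕ => (2 * a / l) ^ a * ρ ^ (n + 1)) := by
      exact ((summable_geometric_of_lt_one hρ0.le hρ1).mul_right ρ |>.congr
        (fun n => by rw [pow_succ])).mul_left _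
    have hqe : q ≤ Real.exp (-l) := by
      have := Real.add_one_le_exp (-l)
      simp only [hl] at *
      linarith
    have hpt : ∀ n : ℕ, ((n : ℝ) + 1) ^ a * q ^ (n + 1) ≤ (2 * a / l) ^ a * ρ ^ (n + 1) := by
      intro n
      have b1 : ((n : ℝ) + 1) ^ a ≤ (a / (l / 2)) ^ a * Real.exp ((l / 2) * ((n : ℝ) + 1)) :=
        rpow_le_mul_exp ha0 (by positivity) (by positivity)
      have b1' : (a / (l / 2)) ^ a = (2 * a / l) ^ a := by
        rw [div_div_eq_mul_div, mul_comm a 2]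
      have b2 : q ^ (n + 1) ≤ Real.exp (-l) ^ (n + 1) :=
        pow_le_pow_left₀ hq0 hqe (n + 1)
      have b3 : Real.exp ((l / 2) * ((n : ℝ) + 1)) = Real.exp (l / 2) ^ (n + 1) := by
        rw [← Real.exp_nat_mul]
        push_cast
        ring_nf
      have b4 : Real.exp (l / 2) ^ (n + 1) * Real.exp (-l) ^ (n + 1) = ρ ^ (n + 1) := by
        rw [← mul_pow, ← Real.exp_add, hρdef]
        ring_nf
      calc ((n : ℝ) + 1) ^ a * q ^ (n + 1)
          ≤ ((2 * a / l) ^ a * Real.exp (l / 2) ^ (n + 1)) * Real.exp (-l) ^ (n + 1) := by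
            apply mul_le_mul _ b2 (pow_nonneg hq0 _) _
            · rw [← b3, ← b1']; exact b1
            · positivity
        _ = (2 * a / l) ^ a * ρ ^ (n + 1) := by rw [mul_assoc, b4]
    have hnonneg : ∀ n : ℕ, 0 ≤ ((n : ℝ) + 1) ^ a * q ^ (n + 1) := fun n => by positivity
    have hsum : Summable (fun n : ℕ => ((n : ℝ) + 1) ^ a * q ^ (n + 1)) :=
      Summable.of_nonneg_of_le hnonneg hpt hgeo
    refine ⟨hsum, ?_⟩
    have hρ4 : ρ ≤ 1 - l / 4 := by
      have h1 : 1 + l / 2 ≤ Real.exp (l / 2) := by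
        have := Real.add_one_le_exp (l / 2); linarith
      have h2 : ρ * Real.exp (l / 2) = 1 := by
        rw [hρdef, ← Real.exp_add]; norm_num
      nlinarith [Real.exp_pos (l / 2)]
    have hinv : (1 - ρ)⁻¹ ≤ 4 / l := by
      have h1 : l / 4 ≤ 1 - ρ := by linarith
      have h2 : (0:ℝ) < l / 4 := by positivity
      calc (1 - ρ)⁻¹ ≤ (l / 4)⁻¹ := by
            apply inv_anti₀ h2 h1
        _ = 4 / l := by field_simp
    calc ∑' n : ℕ, ((n : ℝ) + 1) ^ a * q ^ (n + 1)
        ≤ ∑' n : ℕ, (2 * a / l) ^ a * ρ ^ (n + 1) := Summable.tsum_le_tsum hpt hsum hgeo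
      _ = (2 * a / l) ^ a * ∑' n : ℕ, ρ ^ (n + 1) := tsum_mul_left
      _ ≤ (2 * a / l) ^ a * (1 - ρ)⁻¹ := by
          apply mul_le_mul_of_nonneg_left _ (Real.rpow_nonneg (div_nonneg (by linarith) hl0.le) a)
          have e1 : ∑' n : ℕ, ρ ^ (n + 1) = (1 - ρ)⁻¹ * ρ := by
            simp only [pow_succ]
            rw [tsum_mul_right, tsum_geometric_of_lt_one hρ0.le hρ1]
          rw [e1]
          calc (1 - ρ)⁻¹ * ρ ≤ (1 - ρ)⁻¹ * 1 := by
                apply mul_le_mul_of_nonneg_left hρ1.le (inv_nonneg.mpr (by linarith))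
            _ = (1 - ρ)⁻¹ := mul_one _
      _ ≤ (2 * a / l) ^ a * (4 / l) := by
          apply mul_le_mul_of_nonneg_left hinv (Real.rpow_nonneg (div_nonneg (by linarith) hl0.le) a)
      _ = 4 * (2 * a) ^ a * (1 - q) ^ (-(a + 1)) := by
          rw [Real.div_rpow (by nlinarith : (0:ℝ) ≤ 2 * a) hl0.le, ← hl]
          rw [Real.rpow_neg hl0.le, Real.rpow_add hl0, Real.rpow_one]
          have : (0:ℝ) < l ^ a := Real.rpow_pos_of_pos hl0 a
          field_simp

set_option maxHeartbeats 1000000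

/-- Finiteness of the quantity `A`:
`∫₀^{1/2} (∑_n n^α |μ̂(t)|^{ns})^{1/s} |1−μ̂(t)|^r / t dt < ∞` under BA₂. -/
theorem stmt12 (μ μ' μ'' : ℝ → ℂ) (h h' : ℝ → ℝ) (c C : ℝ) (hc : 0 < c) (hC : 0 < C)
    (hμcont : Continuous μ) (hμ0 : μ 0 = 1)
    (hhcont : Continuous h) (h0 : h 0 = 0) (heven : ∀ t, h (-t) = h t)
    (hnn : ∀ t, 0 ≤ h t)
    (hd1 : ∀ t : ℝ, 0 < |t| → |t| < 1 / 2 → HasDerivAt μ (μ' t) t)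
    (hd2 : ∀ t : ℝ, 0 < |t| → |t| < 1 / 2 → HasDerivAt μ' (μ'' t) t)
    (hhd : ∀ t : ℝ, 0 < t → t < 1 → HasDerivAt h (h' t) t)
    (hBAi : ∀ t : ℝ, 0 < |t| → |t| < 1 / 2 → ‖μ t‖ ≤ 1 - c * h t)
    (hBAii : ∀ t : ℝ, 0 < |t| → |t| < 1 / 2 → |t| * ‖μ' t‖ ≤ C * h t)
    (hBAiii : ∀ t : ℝ, 0 < |t| → |t| < 1 / 2 → ‖μ' t‖ ≤ C * h' t)
    (hBAiv : ∀ t : ℝ, 0 < |t| → |t| < 1 / 2 → |t| * ‖μ'' t‖ ≤ C * ‖μ' t‖)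
    (hBAv : ∀ t : ℝ, 0 < t → t < 1 → h t ≤ C * t * h' t)
    (r s α : ℝ) (hr : 0 < r) (hs : 1 ≤ s) (hα : -1 ≤ α) (hsr : α + 1 < s * r) :
    ∫⁻ t in Set.Ioo (0 : ℝ) (1 / 2),
      ENNReal.ofReal ((∑' n : ℕ, ((n : ℝ) + 1) ^ α * ‖μ t‖ ^ (((n : ℝ) + 1) * s)) ^ (1 / s) *
        ‖1 - μ t‖ ^ r / t) < ⊤ := by
  have hs0 : (0 : ℝ) < s := lt_of_lt_of_le one_pos hs
  -- Step A : ‖1 - μ t‖ ≤ C * h t on (0, 1/2)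
  have claim2 : ∀ t ∈ Set.Ioo (0 : ℝ) (1 / 2), ‖1 - μ t‖ ≤ C * h t := by
    intro t ht
    obtain ⟨ht0, ht2⟩ := ht
    have key : ∀ u ∈ Set.Ioo (0 : ℝ) t, ‖1 - μ t‖ ≤ ‖1 - μ u‖ + C * (h t - h u) := by
      intro u hu
      have hut : u ≤ t := hu.2.le
      have happ : ∀ ⦃x⦄, x ∈ Set.Icc u t → ‖1 - μ x‖ ≤ ‖1 - μ u‖ + C * (h x - h u) := by
        apply image_norm_le_of_norm_deriv_right_le_deriv_boundary'
          (f := fun x => 1 - μ x) (f' := fun x => -μ' x)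
          (B := fun x => ‖1 - μ u‖ + C * (h x - h u)) (B' := fun x => C * h' x)
        · exact (continuous_const.sub hμcont).continuousOn
        · intro x hx
          have hx0 : 0 < x := lt_of_lt_of_le hu.1 hx.1
          have hxa : 0 < |x| := by rwa [abs_of_pos hx0]
          have hxb : |x| < 1 / 2 := by rw [abs_of_pos hx0]; linarith [hx.2, ht2]
          exact ((hd1 x hxa hxb).const_sub (1 : ℂ)).hasDerivWithinAt
        · simp
        · exact (continuous_const.add
            (continuous_const.mul (hhcont.sub continuous_const))).continuousOn
        · intro x hx
          have hx0 : 0 < x := lt_of_lt_of_le hu.1 hx.1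
          exact ((((hhd x hx0 (by linarith [hx.2, ht2])).sub_const (h u)).const_mul
            C).const_add ‖1 - μ u‖).hasDerivWithinAt
        · intro x hx
          have hx0 : 0 < x := lt_of_lt_of_le hu.1 hx.1
          have hxa : 0 < |x| := by rwa [abs_of_pos hx0]
          have hxb : |x| < 1 / 2 := by rw [abs_of_pos hx0]; linarith [hx.2, ht2]
          rw [norm_neg]
          exact hBAiii x hxa hxb
      exact happ (Set.right_mem_Icc.mpr hut)
    have hcont : Continuous fun u => ‖1 - μ u‖ + C * (h t - h u) :=
      ((continuous_const.sub hμcont).norm).add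
        (continuous_const.mul (continuous_const.sub hhcont))
    have hlim : Filter.Tendsto (fun u => ‖1 - μ u‖ + C * (h t - h u))
        (nhdsWithin 0 (Set.Ioi 0)) (nhds (C * h t)) := by
      have h1 := hcont.tendsto 0
      rw [hμ0, h0, sub_zero, sub_self, norm_zero, zero_add] at h1
      exact h1.mono_left nhdsWithin_le_nhds
    refine ge_of_tendsto hlim ?_
    filter_upwards [Ioo_mem_nhdsGT ht0] with u hu using key u hu
  -- Step B : h' ≥ 0 on (0,1)
  have hh'nonneg : ∀ x : ℝ, 0 < x → x < 1 → 0 ≤ h' x := by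
    intro x hx0 hx1
    by_contra hcon
    push_neg at hcon
    have h1 := hBAv x hx0 hx1
    nlinarith [hnn x, mul_pos (mul_pos hC hx0) (neg_pos.mpr hcon)]
  -- constants
  obtain ⟨ε, hεdef⟩ : ∃ x : ℝ, x = (s * r - (α + 1)) / 2 := ⟨_, rfl⟩
  have hε0 : 0 < ε := by rw [hεdef]; linarith
  obtain ⟨a, hadef⟩ : ∃ x : ℝ, x = α + ε := ⟨_, rfl⟩
  have ha1 : -1 < a := by rw [hadef]; linarith
  obtain ⟨K, hK0, hKprop⟩ := sum_bound ha1
  obtain ⟨δ, hδdef⟩ : ∃ x : ℝ, x = C⁻¹ := ⟨_, rfl⟩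
  have hδ0 : 0 < δ := by rw [hδdef]; positivity
  obtain ⟨β, hβdef⟩ : ∃ x : ℝ, x = r - (a + 1) / s := ⟨_, rfl⟩
  have hβ0 : 0 < β := by
    rw [hβdef, sub_pos, div_lt_iff₀ hs0]
    have hc' : r * s = s * r := mul_comm r s
    rw [hadef, hεdef]
    linarith
  obtain ⟨M, hMdef⟩ : ∃ x : ℝ, x = h (1 / 2) * 2 ^ δ := ⟨_, rfl⟩
  have hM0 : 0 ≤ M := by
    rw [hMdef]
    exact mul_nonneg (hnn _) (Real.rpow_nonneg (by norm_num) _)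
  obtain ⟨K₄, hK₄def⟩ : ∃ x : ℝ, x = K ^ (1 / s) * c ^ (-((a + 1) / s)) * C ^ r * M ^ β := ⟨_, rfl⟩
  have hK₄0 : 0 ≤ K₄ := by
    rw [hK₄def]
    exact mul_nonneg (mul_nonneg (mul_nonneg (Real.rpow_nonneg hK0.le _)
      (Real.rpow_nonneg hc.le _)) (Real.rpow_nonneg hC.le _)) (Real.rpow_nonneg hM0 _)
  -- Step C : h t ≤ M * t ^ δ on (0, 1/2)
  have claimM : ∀ t ∈ Set.Ioo (0 : ℝ) (1 / 2), h t ≤ M * t ^ δ := by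
    intro t ht
    obtain ⟨ht0, ht2⟩ := ht
    rcases eq_or_lt_of_le (hnn t) with hh0 | hh0
    · rw [← hh0]
      exact mul_nonneg hM0 (Real.rpow_nonneg ht0.le _)
    · have hmono : MonotoneOn h (Set.Icc t (1 / 2)) := by
        apply monotoneOn_of_deriv_nonneg (convex_Icc _ _) hhcont.continuousOn
        · intro x hx
          rw [interior_Icc] at hx
          exact ((hhd x (lt_trans ht0 hx.1) (by linarith [hx.2])).differentiableAt).differentiableWithinAt
        · intro x hx
          rw [interior_Icc] at hx
          rw [(hhd x (lt_trans ht0 hx.1) (by linarith [hx.2])).deriv]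
          exact hh'nonneg x (lt_trans ht0 hx.1) (by linarith [hx.2])
      have hpos : ∀ x ∈ Set.Icc t (1 / 2), 0 < h x := fun x hx =>
        lt_of_lt_of_le hh0 (hmono (Set.left_mem_Icc.mpr ht2.le) hx hx.1)
      have h2pos : (0 : ℝ) < h (1 / 2) := hpos _ (Set.right_mem_Icc.mpr ht2.le)
      set ψ : ℝ → ℝ := fun u => Real.log (h u) - δ * Real.log u with hψdef
      have hψd : ∀ x ∈ Set.Ioo t (1 / 2), HasDerivAt ψ (h' x / h x - δ * x⁻¹) x := by
        intro x hx
        have hx0 : (0 : ℝ) < x := lt_trans ht0 hx.1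
        have hhx : h x ≠ 0 := (hpos x ⟨hx.1.le, hx.2.le⟩).ne'
        exact ((hhd x hx0 (by linarith [hx.2])).log hhx).sub
          ((Real.hasDerivAt_log hx0.ne').const_mul δ)
      have hψmono : MonotoneOn ψ (Set.Icc t (1 / 2)) := by
        apply monotoneOn_of_deriv_nonneg (convex_Icc _ _)
        · apply ContinuousOn.sub
          · exact ContinuousOn.log hhcont.continuousOn fun x hx => (hpos x hx).ne'
          · exact continuousOn_const.mul (ContinuousOn.log continuousOn_id
              fun x hx => (lt_of_lt_of_le ht0 hx.1).ne')
        · intro x hx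
          rw [interior_Icc] at hx
          exact (hψd x hx).differentiableAt.differentiableWithinAt
        · intro x hx
          rw [interior_Icc] at hx
          rw [(hψd x hx).deriv]
          have hx0 : (0 : ℝ) < x := lt_trans ht0 hx.1
          have hhx : 0 < h x := hpos x ⟨hx.1.le, hx.2.le⟩
          have hv := hBAv x hx0 (by linarith [hx.2])
          have he : δ * x⁻¹ = 1 / (C * x) := by
            rw [hδdef]; field_simp
          rw [sub_nonneg, he, div_le_div_iff₀ (by positivity) hhx]
          nlinarith
      have hψle : ψ t ≤ ψ (1 / 2) :=
        hψmono (Set.left_mem_Icc.mpr ht2.le) (Set.right_mem_Icc.mpr ht2.le) ht2.le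
      have e2 : M * t ^ δ =
          Real.exp ((Real.log (h (1 / 2)) + Real.log 2 * δ) + Real.log t * δ) := by
        rw [hMdef, Real.exp_add, Real.exp_add, Real.exp_log h2pos,
          ← Real.rpow_def_of_pos (by norm_num : (0 : ℝ) < 2),
          ← Real.rpow_def_of_pos ht0]
      rw [e2, show h t = Real.exp (Real.log (h t)) from (Real.exp_log hh0).symm,
        Real.exp_le_exp]
      have hlog2 : Real.log (1 / 2 : ℝ) = -Real.log 2 := by
        rw [show (1 : ℝ) / 2 = 2⁻¹ by norm_num, Real.log_inv]
      have := hψle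
      rw [hψdef] at this
      simp only [hlog2] at this
      nlinarith [this, hδ0]
  -- Step D : pointwise bound on the integrand
  have claimB : ∀ t ∈ Set.Ioo (0 : ℝ) (1 / 2),
      (∑' n : ℕ, ((n : ℝ) + 1) ^ α * ‖μ t‖ ^ (((n : ℝ) + 1) * s)) ^ (1 / s) *
        ‖1 - μ t‖ ^ r / t ≤ K₄ * t ^ (δ * β - 1) := by
    intro t ht
    obtain ⟨ht0, ht2⟩ := ht
    have htabs0 : 0 < |t| := by rwa [abs_of_pos ht0]
    have htabs2 : |t| < 1 / 2 := by rwa [abs_of_pos ht0]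
    have hRHS0 : 0 ≤ K₄ * t ^ (δ * β - 1) := mul_nonneg hK₄0 (Real.rpow_nonneg ht0.le _)
    rcases eq_or_lt_of_le (hnn t) with hh0 | hh0
    · have hz : ‖1 - μ t‖ = 0 := by
        have h1 := claim2 t ⟨ht0, ht2⟩
        rw [← hh0, mul_zero] at h1
        exact le_antisymm h1 (norm_nonneg _)
      rw [hz, Real.zero_rpow hr.ne', mul_zero, zero_div]
      exact hRHS0
    · set x := ‖μ t‖ with hxdef
      have hx0 : 0 ≤ x := norm_nonneg _
      have hxle : x ≤ 1 - c * h t := hBAi t htabs0 htabs2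
      have hchpos : 0 < c * h t := mul_pos hc hh0
      have hxlt1 : x < 1 := lt_of_le_of_lt hxle (by linarith)
      rcases eq_or_lt_of_le hx0 with hx00 | hx00
      · have hzt : ∀ n : ℕ, ((n : ℝ) + 1) ^ α * x ^ (((n : ℝ) + 1) * s) = 0 := by
          intro n
          rw [← hx00, Real.zero_rpow (by positivity : ((n : ℝ) + 1) * s ≠ 0), mul_zero]
        rw [tsum_congr hzt, tsum_zero, Real.zero_rpow (by positivity : (1 : ℝ) / s ≠ 0),
          zero_mul, zero_div]
        exact hRHS0
      · set q := x ^ s with hqdef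
        have hq0 : 0 ≤ q := Real.rpow_nonneg hx0 s
        have hq1 : q < 1 := Real.rpow_lt_one hx0 hxlt1 hs0
        have hqx : q ≤ x := by
          rw [hqdef]
          calc x ^ s ≤ x ^ (1 : ℝ) := Real.rpow_le_rpow_of_exponent_ge hx00 hxlt1.le hs
            _ = x := Real.rpow_one x
        obtain ⟨hsumdom, hbound⟩ := hKprop q hq0 hq1
        have hterm : ∀ n : ℕ, ((n : ℝ) + 1) ^ α * x ^ (((n : ℝ) + 1) * s)
            = ((n : ℝ) + 1) ^ α * q ^ (n + 1) := by
          intro n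
          congr 1
          rw [mul_comm ((n : ℝ) + 1) s, Real.rpow_mul hx0, ← hqdef,
            show ((n : ℝ) + 1) = ((n + 1 : ℕ) : ℝ) by push_cast; ring,
            Real.rpow_natCast]
        have hptle : ∀ n : ℕ, ((n : ℝ) + 1) ^ α * q ^ (n + 1)
            ≤ ((n : ℝ) + 1) ^ a * q ^ (n + 1) := by
          intro n
          apply mul_le_mul_of_nonneg_right _ (pow_nonneg hq0 _)
          exact Real.rpow_le_rpow_of_exponent_le
            (by nlinarith [Nat.cast_nonneg (α := ℝ) n]) (by rw [hadef]; linarith)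
        have hsumf : Summable (fun n : ℕ => ((n : ℝ) + 1) ^ α * q ^ (n + 1)) :=
          Summable.of_nonneg_of_le (fun n => by positivity) hptle hsumdom
        have hS1 : (∑' n : ℕ, ((n : ℝ) + 1) ^ α * x ^ (((n : ℝ) + 1) * s))
            ≤ K * (1 - q) ^ (-(a + 1)) := by
          rw [tsum_congr hterm]
          exact le_trans (Summable.tsum_le_tsum hptle hsumf hsumdom) hbound
        have hq_le : c * h t ≤ 1 - q := by linarith
        have hS2 : K * (1 - q) ^ (-(a + 1)) ≤ K * (c * h t) ^ (-(a + 1)) := by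
          apply mul_le_mul_of_nonneg_left _ hK0.le
          exact Real.rpow_le_rpow_of_nonpos hchpos hq_le (by linarith)
        have hSnn : 0 ≤ ∑' n : ℕ, ((n : ℝ) + 1) ^ α * x ^ (((n : ℝ) + 1) * s) :=
          tsum_nonneg fun n => by positivity
        have hS3 : (∑' n : ℕ, ((n : ℝ) + 1) ^ α * x ^ (((n : ℝ) + 1) * s)) ^ (1 / s)
            ≤ K ^ (1 / s) * (c ^ (-((a + 1) / s)) * h t ^ (-((a + 1) / s))) := by
          calc (∑' n : ℕ, ((n : ℝ) + 1) ^ α * x ^ (((n : ℝ) + 1) * s)) ^ (1 / s)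
              ≤ (K * (c * h t) ^ (-(a + 1))) ^ (1 / s) :=
                Real.rpow_le_rpow hSnn (le_trans hS1 hS2) (by positivity)
            _ = K ^ (1 / s) * (c ^ (-((a + 1) / s)) * h t ^ (-((a + 1) / s))) := by
                rw [Real.mul_rpow hK0.le (Real.rpow_nonneg hchpos.le _),
                  ← Real.rpow_mul hchpos.le,
                  show -(a + 1) * (1 / s) = -((a + 1) / s) by ring,
                  Real.mul_rpow hc.le (hnn t)]
        have hnorm : ‖1 - μ t‖ ^ r ≤ C ^ r * h t ^ r := by
          calc ‖1 - μ t‖ ^ r ≤ (C * h t) ^ r :=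
                Real.rpow_le_rpow (norm_nonneg _) (claim2 t ⟨ht0, ht2⟩) hr.le
            _ = C ^ r * h t ^ r := Real.mul_rpow hC.le (hnn t)
        have h1 : h t ^ (-((a + 1) / s)) * h t ^ r = h t ^ β := by
          rw [← Real.rpow_add hh0]
          congr 1
          rw [hβdef]; ring
        have hcomb : (∑' n : ℕ, ((n : ℝ) + 1) ^ α * x ^ (((n : ℝ) + 1) * s)) ^ (1 / s) *
            ‖1 - μ t‖ ^ r ≤ K ^ (1 / s) * c ^ (-((a + 1) / s)) * C ^ r * h t ^ β := by
          calc (∑' n : ℕ, ((n : ℝ) + 1) ^ α * x ^ (((n : ℝ) + 1) * s)) ^ (1 / s) *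
              ‖1 - μ t‖ ^ r
              ≤ (K ^ (1 / s) * (c ^ (-((a + 1) / s)) * h t ^ (-((a + 1) / s)))) *
                (C ^ r * h t ^ r) := by
                apply mul_le_mul hS3 hnorm (Real.rpow_nonneg (norm_nonneg _) r)
                exact mul_nonneg (Real.rpow_nonneg hK0.le _)
                  (mul_nonneg (Real.rpow_nonneg hc.le _) (Real.rpow_nonneg (hnn t) _))
            _ = K ^ (1 / s) * c ^ (-((a + 1) / s)) * C ^ r *
                (h t ^ (-((a + 1) / s)) * h t ^ r) := by ring
            _ = K ^ (1 / s) * c ^ (-((a + 1) / s)) * C ^ r * h t ^ β := by rw [h1]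
        have hhM : h t ^ β ≤ M ^ β * t ^ (δ * β) := by
          calc h t ^ β ≤ (M * t ^ δ) ^ β :=
                Real.rpow_le_rpow (hnn t) (claimM t ⟨ht0, ht2⟩) hβ0.le
            _ = M ^ β * t ^ (δ * β) := by
                rw [Real.mul_rpow hM0 (Real.rpow_nonneg ht0.le _), ← Real.rpow_mul ht0.le]
        calc (∑' n : ℕ, ((n : ℝ) + 1) ^ α * x ^ (((n : ℝ) + 1) * s)) ^ (1 / s) *
            ‖1 - μ t‖ ^ r / t
            ≤ (K ^ (1 / s) * c ^ (-((a + 1) / s)) * C ^ r * (M ^ β * t ^ (δ * β))) / t := by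
              rw [div_le_div_iff_of_pos_right ht0]
              refine le_trans hcomb ?_
              apply mul_le_mul_of_nonneg_left hhM
              exact mul_nonneg (mul_nonneg (Real.rpow_nonneg hK0.le _)
                (Real.rpow_nonneg hc.le _)) (Real.rpow_nonneg hC.le _)
          _ = K₄ * t ^ (δ * β - 1) := by
              rw [hK₄def, Real.rpow_sub ht0, Real.rpow_one]
              ring
  -- final estimate
  have hexp : (-1 : ℝ) < δ * β - 1 := by nlinarith [mul_pos hδ0 hβ0]
  calc ∫⁻ t in Set.Ioo (0 : ℝ) (1 / 2),
        ENNReal.ofReal ((∑' n : ℕ, ((n : ℝ) + 1) ^ α * ‖μ t‖ ^ (((n : ℝ) + 1) * s)) ^ (1 / s) *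
          ‖1 - μ t‖ ^ r / t)
      ≤ ∫⁻ t in Set.Ioo (0 : ℝ) (1 / 2), ENNReal.ofReal (K₄ * t ^ (δ * β - 1)) := by
        apply lintegral_mono_ae
        rw [ae_restrict_iff' measurableSet_Ioo]
        exact Filter.Eventually.of_forall fun t ht => ENNReal.ofReal_le_ofReal (claimB t ht)
    _ < ⊤ := by
        have h1 : IntervalIntegrable (fun t : ℝ => K₄ * t ^ (δ * β - 1)) volume 0 (1 / 2) :=
          (intervalIntegral.intervalIntegrable_rpow' hexp).const_mul K₄
        have h2 : IntegrableOn (fun t : ℝ => K₄ * t ^ (δ * β - 1))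
            (Set.Ioo (0 : ℝ) (1 / 2)) volume :=
          ((intervalIntegrable_iff_integrableOn_Ioc_of_le (by norm_num)).1 h1).mono_set
            Set.Ioo_subset_Ioc_self
        exact h2.lintegral_lt_top
end

section
/- Let (X,m) be a probability space, τ an ergodic invertible measure-preserving transformation, f ∈ L¹(X), λ > 0, and let f = g + b be the ergodic Calderón–Zygmund decomposition at level λ, with b = ∑_i b_i, b_i supported on E_i = ∪_{j=1}^{l_i} τ^j B_i, satisfying ∑_{k=1}^{l_i} b_i(τ^k x) = 0 and ∑_{k=1}^{l_i} |b_i(τ^k x)| ≤ 2λ for x ∈ B_i. Then for any finite signed measure ν on ℤ and x ∈ X: ν-convolution of b_i can be rewritten as τ_ν b_i(x) = ∑_{j : τ^j x ∈ B_i} ∑_{l=1}^{l_i} (ν(j+l) − ν(j)) b_i(τ^{j+l} x), where τ_ν b_i(x) = ∑_j ν(j) b_i(τ^j x). -/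
open Classical

open MeasureTheory

/-- The rewriting of `τ_ν b_i` via the cancellation property of the "bad" function of
the ergodic Calderón–Zygmund decomposition. -/
theorem stmt16 {X : Type*} [MeasurableSpace X] (m : Measure X) [IsProbabilityMeasure m]
    (τ : X ≃ X) (hmeas : Measurable τ) (hmp : MeasurePreserving τ m m)
    (herg : Ergodic τ m)
    (f : X → ℝ) (hf : Integrable f m) (lam : ℝ) (hlam : 0 < lam)
    (b : X → ℝ) (B : Set X) (L : ℕ) (hL : 1 ≤ L)
    (hdisj : ∀ i j : ℕ, i ≤ L → j ≤ L → i ≠ j →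
      Disjoint ((⇑(τ ^ i)) '' B) ((⇑(τ ^ j)) '' B))
    (hsupp : ∀ x : X, b x ≠ 0 → x ∈ ⋃ j ∈ Finset.Icc 1 L, (⇑(τ ^ j)) '' B)
    (hcancel : ∀ x ∈ B, ∑ k ∈ Finset.Icc 1 L, b ((τ ^ k) x) = 0)
    (hbound : ∀ x ∈ B, ∑ k ∈ Finset.Icc 1 L, |b ((τ ^ k) x)| ≤ 2 * lam)
    (ν : ℤ → ℝ) (hν : Summable fun k => |ν k|) :
    ∀ x : X, ∑' j : ℤ, ν j * b ((τ ^ j) x) =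
      ∑' j : ℤ, (if (τ ^ j) x ∈ B then
        ∑ l ∈ Finset.Icc 1 L, (ν (j + l) - ν j) * b ((τ ^ (j + (l : ℤ))) x) else 0) := by
  intro x
  -- boundedness of b
  have hb_bd : ∀ y : X, |b y| ≤ 2 * lam := by
    intro y
    by_cases hy : b y = 0
    · rw [hy, abs_zero]; positivity
    · have := hsupp y hy
      simp only [Set.mem_iUnion, Set.mem_image] at this
      obtain ⟨s, hsmem, z, hz, hzy⟩ := this
      have h1 : |b y| ≤ ∑ k ∈ Finset.Icc 1 L, |b ((τ ^ k) z)| := by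
        rw [← hzy]
        exact Finset.single_le_sum (f := fun k => |b ((τ ^ k) z)|) (fun k _ => abs_nonneg _) hsmem
      exact h1.trans (hbound z hz)
  -- uniqueness of the shift
  have hkx : ∀ (k : ℤ) (l : ℕ), (τ ^ (k - (l : ℤ))) x ∈ B →
      (τ ^ k) x ∈ (⇑(τ ^ l)) '' B := by
    intro k l hl
    refine ⟨(τ ^ (k - (l : ℤ))) x, hl, ?_⟩
    rw [← zpow_natCast τ l, ← Equiv.Perm.mul_apply, ← zpow_add]
    congr 1
    ring
  have huniq : ∀ (k : ℤ) (l1 l2 : ℕ), l1 ∈ Finset.Icc 1 L → l2 ∈ Finset.Icc 1 L →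
      (τ ^ (k - (l1 : ℤ))) x ∈ B → (τ ^ (k - (l2 : ℤ))) x ∈ B → l1 = l2 := by
    intro k l1 l2 h1 h2 hb1 hb2
    by_contra hne
    exact Set.disjoint_left.1
      (hdisj l1 l2 (Finset.mem_Icc.1 h1).2 (Finset.mem_Icc.1 h2).2 hne)
      (hkx k l1 hb1) (hkx k l2 hb2)
  set F : ℤ → ℕ → ℝ := fun k l =>
    if (τ ^ (k - (l : ℤ))) x ∈ B then ν k * b ((τ ^ k) x) else 0 with hF
  set H : ℤ → ℕ → ℝ := fun j l =>
    if (τ ^ j) x ∈ B then ν (j + l) * b ((τ ^ (j + (l : ℤ))) x) else 0 with hHdef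
  have hH_eq : ∀ (j : ℤ) (l : ℕ), H j l = F (j + l) l := by
    intro j l
    simp only [hF, hHdef, add_sub_cancel_right]
  -- summability of F (· , l)
  have hFl : ∀ l : ℕ, Summable fun k => F k l := by
    intro l
    refine Summable.of_norm_bounded (hν.mul_right (2 * lam)) ?_
    intro k
    simp only [hF, Real.norm_eq_abs]
    split
    · rw [abs_mul]
      exact mul_le_mul_of_nonneg_left (hb_bd _) (abs_nonneg _)
    · rw [abs_zero]; positivity
  have hHl : ∀ l : ℕ, Summable fun j => H j l := by
    intro l
    exact ((Equiv.addRight ((l : ℤ))).summable_iff.2 (hFl l)).congr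
      (fun j => (hH_eq j l).symm)
  -- termwise identity on the left
  have hkey : ∀ k : ℤ, ν k * b ((τ ^ k) x) = ∑ l ∈ Finset.Icc 1 L, F k l := by
    intro k
    by_cases hb0 : b ((τ ^ k) x) = 0
    · simp [hF, hb0]
    · have := hsupp _ hb0
      simp only [Set.mem_iUnion, Set.mem_image] at this
      obtain ⟨l0, hl0mem, z, hz, hze⟩ := this
      have hzeq : z = (τ ^ (k - (l0 : ℤ))) x := by
        have hze' : (τ ^ ((l0 : ℤ))) z = (τ ^ k) x := by
          rw [zpow_natCast]; exact hze
        have h2 := congrArg (⇑(τ ^ (-(l0 : ℤ)))) hze'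
        rw [← Equiv.Perm.mul_apply, ← Equiv.Perm.mul_apply, ← zpow_add, ← zpow_add] at h2
        have e1 : (-(l0 : ℤ)) + (l0 : ℤ) = 0 := by ring
        have e2 : (-(l0 : ℤ)) + k = k - l0 := by ring
        rw [e1, e2, zpow_zero] at h2
        simpa using h2
      have hl0 : (τ ^ (k - (l0 : ℤ))) x ∈ B := hzeq ▸ hz
      rw [Finset.sum_eq_single_of_mem l0 hl0mem]
      · simp [hF, hl0]
      · intro l hl hne
        have hnot : ¬ (τ ^ (k - (l : ℤ))) x ∈ B :=
          fun hmem => hne (huniq k l l0 hl hl0mem hmem hl0)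
        simp [hF, hnot]
  -- termwise identity on the right
  have hrkey : ∀ j : ℤ, (if (τ ^ j) x ∈ B then
      ∑ l ∈ Finset.Icc 1 L, (ν (j + l) - ν j) * b ((τ ^ (j + (l : ℤ))) x) else 0)
      = ∑ l ∈ Finset.Icc 1 L, H j l := by
    intro j
    by_cases hj : (τ ^ j) x ∈ B
    · simp only [hj, if_true, hHdef, if_pos hj]
      have hcan : ∑ l ∈ Finset.Icc 1 L, b ((τ ^ (j + (l : ℤ))) x) = 0 := by
        have : ∀ l : ℕ, b ((τ ^ (j + (l : ℤ))) x) = b ((τ ^ l) ((τ ^ j) x)) := by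
          intro l
          congr 1
          rw [← zpow_natCast τ l, ← Equiv.Perm.mul_apply, ← zpow_add, add_comm]
        simp only [this]
        exact hcancel _ hj
      calc ∑ l ∈ Finset.Icc 1 L, (ν (j + l) - ν j) * b ((τ ^ (j + (l : ℤ))) x)
          = ∑ l ∈ Finset.Icc 1 L, (ν (j + l) * b ((τ ^ (j + (l : ℤ))) x)
            - ν j * b ((τ ^ (j + (l : ℤ))) x)) := by
            apply Finset.sum_congr rfl; intro l _; ring
        _ = ∑ l ∈ Finset.Icc 1 L, ν (j + l) * b ((τ ^ (j + (l : ℤ))) x)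
            - ν j * ∑ l ∈ Finset.Icc 1 L, b ((τ ^ (j + (l : ℤ))) x) := by
            rw [Finset.sum_sub_distrib, Finset.mul_sum]
        _ = ∑ l ∈ Finset.Icc 1 L, ν (j + l) * b ((τ ^ (j + (l : ℤ))) x) := by
            rw [hcan, mul_zero, sub_zero]
    · simp [hj, hHdef]
  calc ∑' j : ℤ, ν j * b ((τ ^ j) x)
      = ∑' k : ℤ, ∑ l ∈ Finset.Icc 1 L, F k l := tsum_congr hkey
    _ = ∑ l ∈ Finset.Icc 1 L, ∑' k : ℤ, F k l :=
        Summable.tsum_finsetSum (fun l _ => hFl l)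
    _ = ∑ l ∈ Finset.Icc 1 L, ∑' j : ℤ, H j l := by
        apply Finset.sum_congr rfl
        intro l _
        rw [← (Equiv.addRight ((l : ℤ))).tsum_eq (fun k => F k l)]
        exact tsum_congr fun j => (hH_eq j l).symm
    _ = ∑' j : ℤ, ∑ l ∈ Finset.Icc 1 L, H j l :=
        (Summable.tsum_finsetSum (fun l _ => hHl l)).symm
    _ = ∑' j : ℤ, (if (τ ^ j) x ∈ B then
          ∑ l ∈ Finset.Icc 1 L, (ν (j + l) - ν j) * b ((τ ^ (j + (l : ℤ))) x) else 0) :=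
        tsum_congr fun j => (hrkey j).symm
end
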